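/- arXiv:1710.10339 — 2 statements merged into one kernel-verified Lean document; each statement's English description precedes it below -/
import Mathlib

section
/- Under the G(n, p_n) Erdős–Rényi measure with p_n = Ω(n^{-c}) for some 0 ≤ c < 1/2, for every ε, δ > 0 there exists N such that for all n ≥ N, with probability at least 1 - ε, every subset S of the vertex set with |S| ≤ ⌊n/2⌋ satisfies c(S) ≤ (1+δ)·n²·p_n/4. -/
/-! For a fixed `S`, the cut size `c(S)` counts the present edges among the at most `n²/4` pairs
crossing `S`, so Hoeffding's inequality bounds the probability that it exceeds `(1 + δ) n² p / 4`
by `exp (-(δ n p)² / 2)`. A union bound over the `2ⁿ` subsets costs a factor `2ⁿ`, which is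
harmless because `(n p)² ≥ K² n^(2 - 2c)` grows faster than `n` when `c < 1/2`. -/

open MeasureTheory ProbabilityTheory Filter
open scoped ENNReal NNReal

/-- Index type for potential edges: 2-element subsets of the vertex set. -/
abbrev EdgeIdx (n : ℕ) := {e : Finset (Fin n) // e.card = 2}

/-- The Erdős–Rényi measure `G(n,p)`: each potential edge is present
independently with probability `p`. -/
noncomputable def erMeasure (n : ℕ) (p : ℝ≥0∞) (hp : p ≤ 1) :
    Measure (EdgeIdx n → Bool) :=
  Measure.pi fun _ => (PMF.bernoulli p.toNNReal
    (by simpa using ENNReal.toNNReal_mono ENNReal.one_ne_top hp)).toMeasure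

/-- The cut size `c(S)`: number of present edges with one endpoint in `S`
and the other outside `S`. -/
noncomputable def cut (n : ℕ) (S : Finset (Fin n)) (G : EdgeIdx n → Bool) : ℕ :=
  letI := Classical.decEq (Fin n)
  (Finset.univ.filter fun e : EdgeIdx n =>
    G e = true ∧ (∃ u ∈ e.1, u ∈ S) ∧ (∃ v ∈ e.1, v ∉ S)).card

/-- `L(i, φ, G)`: vertices placed at the (1-indexed) positions `1, …, i`
by the layout `φ` (positions in `Fin n` are 0-indexed). -/
def Lset (n : ℕ) (φ : Fin n ≃ Fin n) (i : ℕ) : Finset (Fin n) :=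
  Finset.univ.filter fun u => (φ u : ℕ) < i

/-- `θ(i, φ, G)`: number of present edges crossing position `i`. -/
noncomputable def theta (n : ℕ) (G : EdgeIdx n → Bool) (φ : Fin n ≃ Fin n) (i : ℕ) : ℕ :=
  cut n (Lset n φ i) G

/-- Cutwidth of a layout: `max_{1 ≤ i ≤ n} θ(i, φ, G)`. -/
noncomputable def CW (n : ℕ) (G : EdgeIdx n → Bool) (φ : Fin n ≃ Fin n) : ℕ :=
  (Finset.Icc 1 n).sup (theta n G φ)

/-- `u` and `v` are adjacent in `G`. -/
def adj (n : ℕ) (G : EdgeIdx n → Bool) (u v : Fin n) : Prop :=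
  u ≠ v ∧ ∃ e : EdgeIdx n, G e = true ∧ e.1 = {u, v}

/-- `δ(i, φ, G)`: number of vertices at positions `≤ i` with a neighbour at a
position `> i`. -/
noncomputable def vsep (n : ℕ) (G : EdgeIdx n → Bool) (φ : Fin n ≃ Fin n) (i : ℕ) : ℕ :=
  letI := Classical.dec
  (Finset.univ.filter fun u =>
    (φ u : ℕ) < i ∧ ∃ v, i ≤ (φ v : ℕ) ∧ adj n G u v).card

/-- Vertex separation of a layout: `max_{1 ≤ i ≤ n} δ(i, φ, G)`. -/
noncomputable def VS (n : ℕ) (G : EdgeIdx n → Bool) (φ : Fin n ≃ Fin n) : ℕ :=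
  (Finset.Icc 1 n).sup (vsep n G φ)

open Finset Real Topology

section BernoulliProduct

variable {ι : Type*} [Fintype ι] (ν : Measure Bool) [IsProbabilityMeasure ν]

lemma iIndepFun_ite_pi :
    iIndepFun (fun (i : ι) (ω : ι → Bool) => if ω i = true then (1 : ℝ) else 0)
      (Measure.pi fun _ => ν) :=
  iIndepFun_pi (X := fun _ b => if b = true then (1 : ℝ) else 0)
    fun _ => (measurable_of_finite _).aemeasurable

lemma integral_ite_pi (i : ι) :
    ∫ ω, (if ω i = true then (1 : ℝ) else 0) ∂(Measure.pi fun _ => ν) = ν.real {true} := by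
  rw [integral_comp_eval (μ := fun _ => ν) (i := i)
    (f := fun b => if b = true then (1 : ℝ) else 0) (measurable_of_finite _).aestronglyMeasurable]
  simp [integral_fintype]

lemma measureReal_card_filter_ge_le (A : Finset ι) {t : ℝ} (ht : 0 ≤ t) :
    (Measure.pi fun _ : ι => ν).real
        {ω | #A * ν.real {true} + t ≤ #{i ∈ A | ω i = true}} ≤ exp (-2 * t ^ 2 / #A) := by
  set μ := Measure.pi fun _ : ι => ν
  set X := fun (i : ι) (ω : ι → Bool) => if ω i = true then (1 : ℝ) else 0
  have hsubG (i : ι) :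
      HasSubgaussianMGF (fun ω => X i ω - ν.real {true}) ((‖(1:ℝ) - 0‖₊ / 2) ^ 2) μ := by
    rw [← integral_ite_pi ν i]
    refine hasSubgaussianMGF_of_mem_Icc (measurable_of_finite _).aemeasurable
      (ae_of_all _ fun ω => ?_)
    by_cases h : ω i = true <;> simp [X, h]
  have hindep : iIndepFun (fun i ω => X i ω - ν.real {true}) μ :=
    (iIndepFun_ite_pi ν).comp (fun _ x => x - ν.real {true}) fun _ => measurable_sub_const _
  have hsum (ω : ι → Bool) :
      ∑ i ∈ A, (X i ω - ν.real {true}) = #{i ∈ A | ω i = true} - #A * ν.real {true} := by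
    simp [X, Finset.sum_sub_distrib, Finset.sum_boole]
  have hvar : ((∑ i ∈ A, (‖(1 : ℝ) - 0‖₊ / 2) ^ 2 : ℝ≥0) : ℝ) = #A / 4 := by
    simp only [sub_zero, nnnorm_one, one_div, inv_pow, sum_const, nsmul_eq_mul, NNReal.coe_mul,
      NNReal.coe_natCast, NNReal.coe_inv, NNReal.coe_pow, NNReal.coe_ofNat]
    ring
  calc μ.real {ω | #A * ν.real {true} + t ≤ #{i ∈ A | ω i = true}}
      = μ.real {ω | t ≤ ∑ i ∈ A, (X i ω - ν.real {true})} := by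
        simp_rw [hsum, le_sub_iff_add_le']
    _ ≤ exp (-t ^ 2 / (2 * ((∑ i ∈ A, (‖(1 : ℝ) - 0‖₊ / 2) ^ 2 : ℝ≥0) : ℝ))) :=
        HasSubgaussianMGF.measure_sum_ge_le_of_iIndepFun hindep (fun i _ => hsubG i) ht
    _ = exp (-2 * t ^ 2 / #A) := by
        rw [hvar]; ring_nf

lemma measureReal_card_filter_ge_le_of_card_le (A : Finset ι) {t m : ℝ} (ht : 0 ≤ t)
    (hA : (#A : ℝ) ≤ m) :
    (Measure.pi fun _ : ι => ν).real
        {ω | #A * ν.real {true} + t ≤ #{i ∈ A | ω i = true}} ≤ exp (-2 * t ^ 2 / m) := by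
  -- For `A = ∅` the Hoeffding bound is `exp (-2 t² / 0) = 1`, which does not weaken to `m`.
  rcases A.eq_empty_or_nonempty with rfl | hA₀
  · rcases ht.eq_or_lt with rfl | ht₀
    · simp
    · simp [ht₀.not_ge, exp_nonneg]
  refine (measureReal_card_filter_ge_le ν A ht).trans (exp_le_exp.2 ?_)
  rw [neg_mul, neg_div, neg_div, neg_le_neg_iff]
  exact div_le_div_of_nonneg_left (by positivity) (by exact_mod_cast hA₀.card_pos) hA

end BernoulliProduct

section Cuts

variable (n : ℕ)

open Classical in
noncomputable def crossingEdges (S : Finset (Fin n)) : Finset (EdgeIdx n) :=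
  {e | (∃ u ∈ e.1, u ∈ S) ∧ ∃ v ∈ e.1, v ∉ S}

lemma cut_eq_card_filter (S : Finset (Fin n)) (G : EdgeIdx n → Bool) :
    cut n S G = #{e ∈ crossingEdges n S | G e = true} := by
  classical
  simp only [cut, crossingEdges, Finset.filter_filter]
  congr 1
  ext e
  simp only [Finset.mem_filter, Finset.mem_univ, true_and]
  tauto

lemma card_crossingEdges_le_mul (S : Finset (Fin n)) :
    #(crossingEdges n S) ≤ #S * (n - #S) := by
  classical
  have himage : (crossingEdges n S).map (Function.Embedding.subtype _) ⊆
      (S ×ˢ Sᶜ).image fun uv => {uv.1, uv.2} := by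
    intro x hx
    simp only [Finset.mem_map, crossingEdges, Finset.mem_filter, Finset.mem_univ, true_and,
      Function.Embedding.subtype_apply] at hx
    obtain ⟨e, ⟨⟨u, hu, huS⟩, v, hv, hvS⟩, rfl⟩ := hx
    have huv : u ≠ v := fun h => hvS (h ▸ huS)
    have he : e.1 = {u, v} :=
      (Finset.eq_of_subset_of_card_le (Finset.insert_subset hu (Finset.singleton_subset_iff.2 hv))
        (by rw [Finset.card_pair huv, e.2])).symm
    exact Finset.mem_image.2 ⟨(u, v), Finset.mem_product.2 ⟨huS, Finset.mem_compl.2 hvS⟩, he.symm⟩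
  calc #(crossingEdges n S) = #((crossingEdges n S).map (Function.Embedding.subtype _)) :=
        (Finset.card_map _).symm
    _ ≤ #(S ×ˢ Sᶜ) := (Finset.card_le_card himage).trans Finset.card_image_le
    _ = #S * (n - #S) := by rw [Finset.card_product, Finset.card_compl, Fintype.card_fin]

lemma card_crossingEdges_le (S : Finset (Fin n)) :
    (#(crossingEdges n S) : ℝ) ≤ n ^ 2 / 4 := by
  have hS : #S ≤ n := by simpa using Finset.card_le_univ S
  have h := card_crossingEdges_le_mul n S
  rw [← Nat.cast_le (α := ℝ), Nat.cast_mul, Nat.cast_sub hS] at h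
  nlinarith [sq_nonneg ((n : ℝ) - 2 * #S)]

end Cuts

section ErdosRenyi

variable (n : ℕ) (p : ℝ≥0∞) (hp : p ≤ 1)

instance : IsProbabilityMeasure (erMeasure n p hp) := by
  unfold erMeasure; infer_instance

lemma erMeasure_real_card_filter_ge_le (A : Finset (EdgeIdx n)) {t m : ℝ} (ht : 0 ≤ t)
    (hA : (#A : ℝ) ≤ m) :
    (erMeasure n p hp).real {G | #A * p.toReal + t ≤ #{e ∈ A | G e = true}} ≤
      exp (-2 * t ^ 2 / m) := by
  unfold erMeasure
  convert measureReal_card_filter_ge_le_of_card_le _ A ht hA using 7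
  · have hp' : p ≠ ⊤ := ne_top_of_le_ne_top ENNReal.one_ne_top hp
    simp [measureReal_def, PMF.bernoulli, hp']
  · infer_instance

lemma erMeasure_real_exists_cut_gt_le {δ : ℝ} (hδ : 0 ≤ δ) :
    (erMeasure n p hp).real {G | ∃ S : Finset (Fin n), (1 + δ) * n ^ 2 * p.toReal / 4 < cut n S G}
      ≤ 2 ^ n * exp (-(δ * n * p.toReal) ^ 2 / 2) := by
  have hS (S : Finset (Fin n)) :
      (erMeasure n p hp).real {G | (1 + δ) * n ^ 2 * p.toReal / 4 < cut n S G} ≤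
        exp (-(δ * n * p.toReal) ^ 2 / 2) := by
    have hA := card_crossingEdges_le n S
    calc _ ≤ (erMeasure n p hp).real {G | #(crossingEdges n S) * p.toReal + δ * n ^ 2 * p.toReal / 4
            ≤ #{e ∈ crossingEdges n S | G e = true}} := by
          refine measureReal_mono fun G hG => ?_
          simp only [Set.mem_ofPred_eq, cut_eq_card_filter] at hG ⊢
          nlinarith [mul_le_mul_of_nonneg_right hA (ENNReal.toReal_nonneg (a := p))]
      _ ≤ exp (-2 * (δ * n ^ 2 * p.toReal / 4) ^ 2 / (n ^ 2 / 4)) :=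
          erMeasure_real_card_filter_ge_le n p hp _ (by positivity) hA
      _ = exp (-(δ * n * p.toReal) ^ 2 / 2) := by
          rcases n.eq_zero_or_pos with rfl | hn
          · simp
          · congr 1
            field_simp
            ring
  calc _ = (erMeasure n p hp).real
        (⋃ S : Finset (Fin n), {G | (1 + δ) * n ^ 2 * p.toReal / 4 < cut n S G}) := by
        rw [Set.ofPred_exists]
    _ ≤ ∑ S : Finset (Fin n), exp (-(δ * n * p.toReal) ^ 2 / 2) :=
        (measureReal_iUnion_fintype_le _).trans (Finset.sum_le_sum fun S _ => hS S)
    _ = 2 ^ n * exp (-(δ * n * p.toReal) ^ 2 / 2) := by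
        simp [Fintype.card_finset]

end ErdosRenyi

lemma tendsto_two_pow_mul_exp_neg_rpow {C r : ℝ} (hC : 0 < C) (hr : 1 < r) :
    Tendsto (fun n : ℕ => 2 ^ n * exp (-(C * (n : ℝ) ^ r))) atTop (𝓝 0) := by
  have hlim : Tendsto (fun x : ℝ => x ^ r * (log 2 * x ^ (-(r - 1)) - C)) atTop atBot := by
    refine (tendsto_rpow_atTop (by linarith)).atTop_mul_neg (neg_lt_zero.2 hC) ?_
    simpa using ((tendsto_rpow_neg_atTop (by linarith : 0 < r - 1)).const_mul (log 2)).sub_const C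
  have hexp : Tendsto (fun x : ℝ => x * log 2 - C * x ^ r) atTop atBot := by
    refine hlim.congr' ((eventually_gt_atTop 0).mono fun x hx => ?_)
    rw [mul_sub, ← mul_assoc, mul_comm (x ^ r), mul_assoc, ← rpow_add hx]
    simp only [neg_sub, add_sub_cancel, rpow_one]
    ring
  refine (tendsto_exp_atBot.comp (hexp.comp tendsto_natCast_atTop_atTop)).congr fun n => ?_
  rw [Function.comp_apply, Function.comp_apply, sub_eq_add_neg, exp_add, mul_comm (n : ℝ),
    ← rpow_def_of_pos two_pos, rpow_natCast]

lemma sq_mul_rpow_two_sub_le {K x q c : ℝ} (hK : 0 ≤ K) (hx : 0 < x) (h : K * x ^ (-c) ≤ q) :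
    K ^ 2 * x ^ (2 - 2 * c) ≤ (x * q) ^ 2 := by
  have hx2 : x ^ (2 - 2 * c) = x ^ 2 * (x ^ (-c)) ^ 2 := by
    rw [← rpow_natCast (x ^ (-c)), ← rpow_mul hx.le, ← rpow_natCast x, ← rpow_add hx]
    ring_nf
  rw [hx2, mul_pow]
  nlinarith [pow_le_pow_left₀ (by positivity) h 2, sq_nonneg x]

lemma ofReal_one_sub_le_of_measureReal_compl_le {Ω : Type*} [MeasurableSpace Ω] {μ : Measure Ω}
    [IsProbabilityMeasure μ] {s : Set Ω} (hs : MeasurableSet s) {ε : ℝ} (h : μ.real sᶜ ≤ ε) :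
    ENNReal.ofReal (1 - ε) ≤ μ s := by
  rw [← ofReal_measureReal, ← compl_compl s, probReal_compl_eq_one_sub hs.compl]
  exact ENNReal.ofReal_le_ofReal (by linarith)

theorem stmt_8_general (c : ℝ) (hc : c < 1 / 2)
    (p : ℕ → ℝ≥0∞) (hp1 : ∀ n, p n ≤ 1)
    (hΩ : ∃ K : ℝ, 0 < K ∧ ∀ᶠ n : ℕ in atTop, K * (n : ℝ) ^ (-c) ≤ (p n).toReal) :
    ∀ ε : ℝ, 0 < ε → ∀ δ : ℝ, 0 < δ → ∃ N : ℕ, ∀ n ≥ N,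
      ENNReal.ofReal (1 - ε) ≤
        erMeasure n (p n) (hp1 n)
          {G | ∀ S : Finset (Fin n), S.card ≤ n / 2 →
            (cut n S G : ℝ) ≤ (1 + δ) * (n : ℝ) ^ 2 * (p n).toReal / 4} := by
  intro ε hε δ hδ
  obtain ⟨K, hK, hpK⟩ := hΩ
  have hdecay := tendsto_two_pow_mul_exp_neg_rpow (C := (δ * K) ^ 2 / 2) (r := 2 - 2 * c)
    (by positivity) (by linarith)
  obtain ⟨N, hN⟩ := eventually_atTop.1
    ((hpK.and (hdecay.eventually (gt_mem_nhds hε))).and (eventually_gt_atTop 0))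
  refine ⟨N, fun n hn => ?_⟩
  obtain ⟨⟨hpn, hsmall⟩, hn₀⟩ := hN n hn
  have hrate := sq_mul_rpow_two_sub_le hK.le (Nat.cast_pos.2 hn₀) hpn
  refine ofReal_one_sub_le_of_measureReal_compl_le (Set.toFinite _).measurableSet ?_
  calc _ ≤ (erMeasure n (p n) (hp1 n)).real
        {G | ∃ S : Finset (Fin n), (1 + δ) * n ^ 2 * (p n).toReal / 4 < cut n S G} :=
        measureReal_mono fun G hG => by
          simp only [Set.mem_compl_iff, Set.mem_ofPred_eq, not_forall, not_le] at hG
          obtain ⟨S, -, hS⟩ := hG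
          exact ⟨S, hS⟩
    _ ≤ 2 ^ n * exp (-(δ * n * (p n).toReal) ^ 2 / 2) :=
        erMeasure_real_exists_cut_gt_le n (p n) (hp1 n) hδ.le
    _ ≤ 2 ^ n * exp (-((δ * K) ^ 2 / 2 * (n : ℝ) ^ (2 - 2 * c))) := by
        gcongr
        nlinarith [mul_le_mul_of_nonneg_left hrate (sq_nonneg δ)]
    _ ≤ ε := hsmall.le

/-- High-probability upper bound on all small cuts: if `p_n = Ω(n^{-c})`
with `0 ≤ c < 1/2`, then w.h.p. every `S` with `|S| ≤ ⌊n/2⌋` has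
`c(S) ≤ (1 + δ) n² p_n / 4`. -/
theorem stmt_8 (c : ℝ) (hc0 : 0 ≤ c) (hc : c < 1 / 2)
    (p : ℕ → ℝ≥0∞) (hp1 : ∀ n, p n ≤ 1)
    (hΩ : ∃ K : ℝ, 0 < K ∧ ∀ᶠ n : ℕ in atTop, K * (n : ℝ) ^ (-c) ≤ (p n).toReal) :
    ∀ ε : ℝ, 0 < ε → ∀ δ : ℝ, 0 < δ → ∃ N : ℕ, ∀ n ≥ N,
      ENNReal.ofReal (1 - ε) ≤
        erMeasure n (p n) (hp1 n)
          {G | ∀ S : Finset (Fin n), S.card ≤ n / 2 →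
            (cut n S G : ℝ) ≤ (1 + δ) * (n : ℝ) ^ 2 * (p n).toReal / 4} :=
  stmt_8_general c hc p hp1 hΩ
end

section
/- Under G(n, p_n) with p_n = Ω(n^{-c}), 0 ≤ c < 1: for all ε, δ > 0 there exists N such that for all n ≥ N, P[MINVS(G_n) ≥ (1-δ)·n - 1] > 1-ε, where MINVS is the minimum over all layouts φ of max_i δ(i,φ,G), with δ(i,φ,G) the number of vertices u with φ(u) ≤ i that have a neighbor v with φ(v) > i. -/
/-!
Take `s = ⌈a n⌉` with `2a ≤ δ`, and call `G` good if every two disjoint `s`-sets of vertices are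
joined by an edge. In any layout, look at the cut after position `i = n - s`: if `s` of the first
`i` vertices had no neighbour among the last `s`, those two `s`-sets would violate goodness, so at
least `i - s + 1 = n - 2s + 1 ≥ (1 - δ)n - 1` vertices lie on the separator. A given pair of
disjoint `s`-sets has `s²` potential edges between them, all absent with probability
`(1 - p)^{s²} ≤ exp(-p s²)`; a union bound over at most `4^n` pairs bounds the probability of not
being good by `4^n exp(-K a² n^{2-c})`, which tends to `0` because `2 - c > 1`.
-/

open MeasureTheory ProbabilityTheory Filter
open scoped ENNReal NNReal

open Topology

instance (n : ℕ) (p : ℝ≥0∞) (hp : p ≤ 1) : IsProbabilityMeasure (erMeasure n p hp) := by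
  unfold erMeasure
  infer_instance

theorem erMeasure_forall_eq_false (n : ℕ) (p : ℝ≥0∞) (hp : p ≤ 1) (F : Finset (EdgeIdx n)) :
    erMeasure n p hp {G | ∀ e ∈ F, G e = false} = (1 - p) ^ F.card := by
  have hpi : {G : EdgeIdx n → Bool | ∀ e ∈ F, G e = false}
      = Set.univ.pi fun e => if e ∈ F then {false} else Set.univ := by
    ext G
    simp only [Set.mem_ofPred_eq, Set.mem_pi, Set.mem_univ, true_implies]
    refine forall_congr' fun e => ?_
    split_ifs <;> simp [*]
  rw [hpi, erMeasure, Measure.pi_pi]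
  trans ∏ e : EdgeIdx n, if e ∈ F then 1 - p else 1
  · refine Finset.prod_congr rfl fun e _ => ?_
    split_ifs
    · rw [PMF.toMeasure_apply_singleton _ _ (measurableSet_singleton _)]
      simp [PMF.bernoulli, ENNReal.coe_toNNReal (ne_top_of_le_ne_top ENNReal.one_ne_top hp)]
    · exact measure_univ
  · simp only [Fintype.prod_ite_mem, Finset.prod_const]

def edgesBetween {n : ℕ} (A B : Finset (Fin n)) : Finset (EdgeIdx n) :=
  Finset.univ.filter fun e => ∃ u ∈ A, ∃ v ∈ B, e.1 = {u, v}

theorem card_mul_card_le_card_edgesBetween {n : ℕ} {A B : Finset (Fin n)} (hAB : Disjoint A B) :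
    A.card * B.card ≤ (edgesBetween A B).card := by
  rw [← Finset.card_product, ← Finset.card_map (Function.Embedding.subtype _)]
  refine Finset.card_le_card_of_injOn (fun uv => {uv.1, uv.2}) ?_ ?_
  · rintro ⟨u, v⟩ huv
    simp only [Finset.coe_product, Set.mem_prod, Finset.mem_coe] at huv
    have hne : u ≠ v := fun h => Finset.disjoint_left.mp hAB huv.1 (h ▸ huv.2)
    simp only [Finset.coe_map, Set.mem_image, Finset.mem_coe, edgesBetween, Finset.mem_filter,
      Finset.mem_univ, true_and, Function.Embedding.subtype_apply]
    exact ⟨⟨{u, v}, Finset.card_pair hne⟩, ⟨u, huv.1, v, huv.2, rfl⟩, rfl⟩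
  · rintro ⟨u, v⟩ huv ⟨u', v'⟩ huv' h
    simp only [Finset.coe_product, Set.mem_prod, Finset.mem_coe] at huv huv'
    replace h : ({u, v} : Finset (Fin n)) = {u', v'} := h
    have hu : u ∈ ({u', v'} : Finset (Fin n)) := h ▸ Finset.mem_insert_self u {v}
    have hv : v ∈ ({u', v'} : Finset (Fin n)) :=
      h ▸ Finset.mem_insert_of_mem (Finset.mem_singleton_self v)
    simp only [Finset.mem_insert, Finset.mem_singleton] at hu hv
    have hAB' := Finset.disjoint_left.mp hAB
    rcases hu with rfl | rfl
    · rcases hv with rfl | rfl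
      · exact absurd huv.2 (hAB' huv.1)
      · rfl
    · exact absurd huv'.2 (hAB' huv.1)

theorem erMeasure_forall_not_adj_le (n : ℕ) (p : ℝ≥0∞) (hp : p ≤ 1) {A B : Finset (Fin n)}
    (hAB : Disjoint A B) :
    erMeasure n p hp {G | ∀ u ∈ A, ∀ v ∈ B, ¬ adj n G u v} ≤ (1 - p) ^ (A.card * B.card) := by
  calc erMeasure n p hp {G | ∀ u ∈ A, ∀ v ∈ B, ¬ adj n G u v}
      ≤ erMeasure n p hp {G | ∀ e ∈ edgesBetween A B, G e = false} := by
        refine measure_mono fun G hG e he => ?_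
        simp only [edgesBetween, Finset.mem_filter, Finset.mem_univ, true_and] at he
        obtain ⟨u, hu, v, hv, huv⟩ := he
        have hne : u ≠ v := fun h => Finset.disjoint_left.mp hAB hu (h ▸ hv)
        exact Bool.not_eq_true _ ▸ fun he => hG u hu v hv ⟨hne, e, he, huv⟩
    _ = (1 - p) ^ (edgesBetween A B).card := erMeasure_forall_eq_false n p hp _
    _ ≤ (1 - p) ^ (A.card * B.card) :=
        pow_le_pow_of_le_one zero_le tsub_le_self (card_mul_card_le_card_edgesBetween hAB)

def LinksDisjointSets (n s : ℕ) (G : EdgeIdx n → Bool) : Prop :=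
  ∀ A B : Finset (Fin n), A.card = s → B.card = s → Disjoint A B → ∃ u ∈ A, ∃ v ∈ B, adj n G u v

theorem erMeasure_not_linksDisjointSets_le (n : ℕ) (p : ℝ≥0∞) (hp : p ≤ 1) (s : ℕ) :
    erMeasure n p hp {G | ¬ LinksDisjointSets n s G} ≤ 4 ^ n * (1 - p) ^ (s * s) := by
  let pairs := Finset.univ.filter fun AB : Finset (Fin n) × Finset (Fin n) =>
    AB.1.card = s ∧ AB.2.card = s ∧ Disjoint AB.1 AB.2
  have hcover : {G | ¬ LinksDisjointSets n s G}
      ⊆ ⋃ AB ∈ pairs, {G | ∀ u ∈ AB.1, ∀ v ∈ AB.2, ¬ adj n G u v} := by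
    intro G hG
    simp only [LinksDisjointSets, not_forall, not_exists, not_and] at hG
    obtain ⟨A, B, hA, hB, hAB, hno⟩ := hG
    exact Set.mem_biUnion (x := (A, B)) (by simp [pairs, hA, hB, hAB]) hno
  have hpairs : (pairs.card : ℝ≥0∞) ≤ 4 ^ n := by
    have : pairs.card ≤ 4 ^ n := by
      calc pairs.card ≤ Fintype.card (Finset (Fin n) × Finset (Fin n)) := Finset.card_filter_le _ _
        _ = 4 ^ n := by simp [Fintype.card_prod, Fintype.card_finset, ← mul_pow]
    exact_mod_cast this
  calc erMeasure n p hp {G | ¬ LinksDisjointSets n s G}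
      ≤ ∑ AB ∈ pairs, erMeasure n p hp {G | ∀ u ∈ AB.1, ∀ v ∈ AB.2, ¬ adj n G u v} :=
        (measure_mono hcover).trans (measure_biUnion_finset_le _ _)
    _ ≤ ∑ _AB ∈ pairs, (1 - p) ^ (s * s) := by
        refine Finset.sum_le_sum fun AB hAB => ?_
        simp only [pairs, Finset.mem_filter, Finset.mem_univ, true_and] at hAB
        obtain ⟨hA, hB, hdisj⟩ := hAB
        simpa only [hA, hB] using erMeasure_forall_not_adj_le n p hp hdisj
    _ ≤ 4 ^ n * (1 - p) ^ (s * s) := by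
        rw [Finset.sum_const, nsmul_eq_mul]
        gcongr

theorem one_sub_pow_le_ofReal_exp {p : ℝ≥0∞} (hp : p ≤ 1) (k : ℕ) :
    (1 - p) ^ k ≤ ENNReal.ofReal (Real.exp (-(p.toReal * k))) := by
  have hp' : p.toReal ≤ 1 := ENNReal.toReal_le_of_le_ofReal zero_le_one (by simpa using hp)
  rw [← ENNReal.ofReal_toReal (ENNReal.sub_ne_top ENNReal.one_ne_top),
    ENNReal.toReal_sub_of_le hp ENNReal.one_ne_top, ENNReal.toReal_one,
    ← ENNReal.ofReal_pow (by linarith)]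
  refine ENNReal.ofReal_le_ofReal ?_
  calc (1 - p.toReal) ^ k ≤ Real.exp (-p.toReal) ^ k := by
        gcongr
        linarith [Real.add_one_le_exp (-p.toReal)]
    _ = Real.exp (-(p.toReal * k)) := by rw [← Real.exp_nat_mul]; ring_nf

theorem card_Lset {n i : ℕ} (φ : Fin n ≃ Fin n) (hi : i ≤ n) : (Lset n φ i).card = i := by
  have : Lset n φ i = (Finset.univ.filter fun j : Fin n => (j : ℕ) < i).map φ.symm.toEmbedding := by
    ext u
    simp [Lset, Finset.mem_map_equiv]
  rw [this, Finset.card_map, Fin.card_filter_val_lt, min_eq_right hi]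

theorem lt_vsep_add_of_linksDisjointSets {n s i : ℕ} {G : EdgeIdx n → Bool}
    (hG : LinksDisjointSets n s G) (φ : Fin n ≃ Fin n) (hi : i + s = n) :
    i < vsep n G φ i + s := by
  classical
  let R : Finset (Fin n) := (Lset n φ i)ᶜ
  let isolated := (Lset n φ i).filter fun u => ¬ ∃ v, i ≤ (φ v : ℕ) ∧ adj n G u v
  have hR : R.card = s := by
    rw [Finset.card_compl, card_Lset φ (by omega), Fintype.card_fin]
    omega
  have hvsep : vsep n G φ i + isolated.card = i := by
    have : vsep n G φ i = ((Lset n φ i).filter fun u => ∃ v, i ≤ (φ v : ℕ) ∧ adj n G u v).card := by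
      simp only [vsep, Lset, Finset.filter_filter]
      congr
    rw [this, Finset.card_filter_add_card_filter_not, card_Lset φ (by omega)]
  suffices isolated.card < s by omega
  by_contra! hs
  obtain ⟨A, hAiso, hA⟩ := Finset.exists_subset_card_eq hs
  have hAR : Disjoint A R :=
    disjoint_compl_right_iff.mpr (hAiso.trans (Finset.filter_subset _ _))
  obtain ⟨u, hu, v, hv, huv⟩ := hG A R hA hR hAR
  have hvi : i ≤ (φ v : ℕ) := by simpa [R, Lset] using hv
  exact (Finset.mem_filter.mp (hAiso hu)).2 ⟨v, hvi, huv⟩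

theorem lt_iInf_VS_add_of_linksDisjointSets {n s : ℕ} {G : EdgeIdx n → Bool}
    (hG : LinksDisjointSets n s G) (hs : s < n) : n < (⨅ φ : Fin n ≃ Fin n, VS n G φ) + 2 * s := by
  obtain ⟨φ, hφ⟩ := ciInf_mem (VS n G)
  rw [← hφ]
  have hvsep := lt_vsep_add_of_linksDisjointSets hG φ (Nat.sub_add_cancel hs.le)
  have hVS : vsep n G φ (n - s) ≤ VS n G φ := Finset.le_sup (by simp; omega)
  omega

theorem one_sub_mul_sub_one_le_iInf_VS {n : ℕ} {a : ℝ} (ha : 0 ≤ a) (ha' : a ≤ 1 / 4) (hn : 2 ≤ n)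
    {G : EdgeIdx n → Bool} (hG : LinksDisjointSets n ⌈a * n⌉₊ G) :
    (1 - 2 * a) * n - 1 ≤ ((⨅ φ : Fin n ≃ Fin n, VS n G φ : ℕ) : ℝ) := by
  have hn' : (2 : ℝ) ≤ n := by exact_mod_cast hn
  have hceil : (⌈a * n⌉₊ : ℝ) < a * n + 1 := Nat.ceil_lt_add_one (by positivity)
  have hs : ⌈a * n⌉₊ < n := by
    have : (⌈a * n⌉₊ : ℝ) < n := by nlinarith
    exact_mod_cast this
  have key : (n + 1 : ℝ) ≤ (⨅ φ : Fin n ≃ Fin n, VS n G φ : ℕ) + 2 * ⌈a * n⌉₊ := by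
    exact_mod_cast lt_iInf_VS_add_of_linksDisjointSets hG hs
  linarith

theorem tendsto_pow_mul_exp_neg_mul_rpow {a C d : ℝ} (ha : 0 < a) (hC : 0 < C) (hd : 1 < d) :
    Tendsto (fun n : ℕ => a ^ n * Real.exp (-(C * (n : ℝ) ^ d))) atTop (𝓝 0) := by
  have hexp : ∀ n : ℕ, 0 < n →
      a ^ n * Real.exp (-(C * (n : ℝ) ^ d)) =
        Real.exp (n * (Real.log a - C * (n : ℝ) ^ (d - 1))) := by
    intro n hn
    rw [← Real.rpow_natCast, Real.rpow_def_of_pos ha, ← Real.exp_add, mul_sub, ← mul_assoc,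
      mul_comm (n : ℝ) C, mul_assoc, ← Real.rpow_one_add' (by positivity) (by linarith)]
    ring_nf
  have hlin : Tendsto (fun x : ℝ => x * (Real.log a - C * x ^ (d - 1))) atTop atBot := by
    refine tendsto_id.atTop_mul_atBot₀ ?_
    exact tendsto_atBot_add_const_left _ _
      (tendsto_neg_atBot_iff.mpr ((tendsto_rpow_atTop (by linarith)).const_mul_atTop hC))
  refine (Real.tendsto_exp_atBot.comp (hlin.comp tendsto_natCast_atTop_atTop)).congr' ?_
  filter_upwards [eventually_gt_atTop 0] with n hn
  exact (hexp n hn).symm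

theorem tendsto_erMeasure_not_linksDisjointSets {c K a : ℝ} (hc : c < 1) (hK : 0 < K) (ha : 0 < a)
    (p : ℕ → ℝ≥0∞) (hp1 : ∀ n, p n ≤ 1)
    (hp : ∀ᶠ n : ℕ in atTop, K * (n : ℝ) ^ (-c) ≤ (p n).toReal)
    (s : ℕ → ℕ) (hs : ∀ n, a * n ≤ s n) :
    Tendsto (fun n => erMeasure n (p n) (hp1 n) {G | ¬ LinksDisjointSets n (s n) G})
      atTop (𝓝 0) := by
  have hbound : Tendsto (fun n : ℕ =>
      ENNReal.ofReal (4 ^ n * Real.exp (-(K * a ^ 2 * (n : ℝ) ^ (2 - c))))) atTop (𝓝 0) := by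
    simpa using ENNReal.tendsto_ofReal (tendsto_pow_mul_exp_neg_mul_rpow (a := 4) (C := K * a ^ 2)
      (d := 2 - c) (by norm_num) (by positivity) (by linarith))
  refine tendsto_of_tendsto_of_tendsto_of_le_of_le' tendsto_const_nhds hbound
    (Eventually.of_forall fun _ => zero_le) ?_
  filter_upwards [hp, eventually_gt_atTop 0] with n hpn hn
  have hn' : (0 : ℝ) < n := by exact_mod_cast hn
  have hexp : K * a ^ 2 * (n : ℝ) ^ (2 - c) ≤ (p n).toReal * ↑(s n * s n) := by
    calc K * a ^ 2 * (n : ℝ) ^ (2 - c) = K * (n : ℝ) ^ (-c) * (a * n) * (a * n) := by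
          rw [show 2 - c = -c + 2 by ring, Real.rpow_add hn', Real.rpow_two]
          ring
      _ ≤ (p n).toReal * s n * s n := by gcongr <;> exact hs n
      _ = (p n).toReal * ↑(s n * s n) := by push_cast; ring
  calc erMeasure n (p n) (hp1 n) {G | ¬ LinksDisjointSets n (s n) G}
      ≤ 4 ^ n * (1 - p n) ^ (s n * s n) := erMeasure_not_linksDisjointSets_le _ _ _ _
    _ ≤ ENNReal.ofReal (4 ^ n) * ENNReal.ofReal (Real.exp (-((p n).toReal * ↑(s n * s n)))) := by
        rw [ENNReal.ofReal_pow (by norm_num), ENNReal.ofReal_ofNat]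
        gcongr
        exact one_sub_pow_le_ofReal_exp (hp1 n) _
    _ ≤ ENNReal.ofReal (4 ^ n * Real.exp (-(K * a ^ 2 * (n : ℝ) ^ (2 - c)))) := by
        rw [← ENNReal.ofReal_mul (by positivity)]
        gcongr

theorem ofReal_one_sub_lt_of_measure_compl_lt {α : Type*} [MeasurableSpace α] {μ : Measure α}
    [IsProbabilityMeasure μ] {s : Set α} {η : ℝ} (hη : η ≤ 1) (h : μ sᶜ < ENNReal.ofReal η) :
    ENNReal.ofReal (1 - η) < μ s := by
  have hη0 : 0 ≤ η := (ENNReal.ofReal_pos.mp (h.trans_le' zero_le)).le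
  rw [ENNReal.ofReal_sub _ hη0, ENNReal.ofReal_one]
  refine ENNReal.sub_lt_of_lt_add (ENNReal.ofReal_le_one.mpr hη) ?_
  calc 1 = μ (s ∪ sᶜ) := by rw [Set.union_compl_self, measure_univ]
    _ ≤ μ s + μ sᶜ := measure_union_le s sᶜ
    _ < μ s + ENNReal.ofReal η := ENNReal.add_lt_add_left (measure_ne_top μ s) h

theorem stmt_13_general (c : ℝ) (hc : c < 1)
    (p : ℕ → ℝ≥0∞) (hp1 : ∀ n, p n ≤ 1)
    (hΩ : ∃ K : ℝ, 0 < K ∧ ∀ᶠ n : ℕ in atTop, K * (n : ℝ) ^ (-c) ≤ (p n).toReal) :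
    ∀ ε : ℝ, 0 < ε → ∀ δ : ℝ, 0 < δ → ∃ N : ℕ, ∀ n ≥ N,
      ENNReal.ofReal (1 - ε) <
        erMeasure n (p n) (hp1 n)
          {G | (1 - δ) * (n : ℝ) - 1 ≤ ((⨅ φ : Fin n ≃ Fin n, VS n G φ : ℕ) : ℝ)} := by
  intro ε hε δ hδ
  obtain ⟨K, hK, hpK⟩ := hΩ
  obtain ⟨a, ha0, haδ, ha4⟩ : ∃ a : ℝ, 0 < a ∧ 2 * a ≤ δ ∧ a ≤ 1 / 4 :=
    ⟨min δ (1 / 2) / 2, by positivity, by linarith [min_le_left δ (1 / 2)],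
      by linarith [min_le_right δ (1 / 2)]⟩
  have hlim := tendsto_erMeasure_not_linksDisjointSets hc hK ha0 p hp1 hpK
    (fun n => ⌈a * n⌉₊) fun n => Nat.le_ceil _
  obtain ⟨N, hN⟩ := eventually_atTop.mp <|
    (hlim.eventually (gt_mem_nhds (ENNReal.ofReal_pos.mpr (lt_min hε one_pos)))).and
      (eventually_ge_atTop 2)
  refine ⟨N, fun n hn => ?_⟩
  obtain ⟨hsmall, hn2⟩ := hN n hn
  have hsub : {G | (1 - δ) * (n : ℝ) - 1 ≤ ((⨅ φ : Fin n ≃ Fin n, VS n G φ : ℕ) : ℝ)}ᶜ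
      ⊆ {G | ¬ LinksDisjointSets n ⌈a * n⌉₊ G} := fun G hG hlinks => hG <|
    calc (1 - δ) * (n : ℝ) - 1 ≤ (1 - 2 * a) * n - 1 := by gcongr
      _ ≤ _ := one_sub_mul_sub_one_le_iInf_VS ha0.le ha4 hn2 hlinks
  -- For `ε > 1` the target `0 < μ E` still needs `μ Eᶜ < 1`, hence the cap at `1`.
  calc ENNReal.ofReal (1 - ε) ≤ ENNReal.ofReal (1 - min ε 1) :=
        ENNReal.ofReal_le_ofReal (by linarith [min_le_left ε 1])
    _ < _ := ofReal_one_sub_lt_of_measure_compl_lt (min_le_right _ _)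
        ((measure_mono hsub).trans_lt hsmall)

/-- High-probability lower bound for minimum vertex separation: under
`G(n, p_n)` with `p_n = Ω(n^{-c})`, `0 ≤ c < 1`, w.h.p.
`MINVS(G_n) ≥ (1 - δ) n - 1`. -/
theorem stmt_13 (c : ℝ) (hc0 : 0 ≤ c) (hc : c < 1)
    (p : ℕ → ℝ≥0∞) (hp1 : ∀ n, p n ≤ 1)
    (hΩ : ∃ K : ℝ, 0 < K ∧ ∀ᶠ n : ℕ in atTop, K * (n : ℝ) ^ (-c) ≤ (p n).toReal) :
    ∀ ε : ℝ, 0 < ε → ∀ δ : ℝ, 0 < δ → ∃ N : ℕ, ∀ n ≥ N,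
      ENNReal.ofReal (1 - ε) <
        erMeasure n (p n) (hp1 n)
          {G | (1 - δ) * (n : ℝ) - 1 ≤ ((⨅ φ : Fin n ≃ Fin n, VS n G φ : ℕ) : ℝ)} :=
  stmt_13_general c hc p hp1 hΩ
end
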